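/- Let (G,P) be a quasi-lattice ordered group and let μ be a finitely additive probability measure on (P,B_P) such that the family (μ(pP))_{p∈P} is summable. Then there exists a countably additive probability measure ν, defined on the σ-algebra of all subsets of P, such that ν(Ω) = μ(Ω) for every Ω ∈ B_P. -/

import Mathlib

/-- The order on `G` induced by the submonoid `P`: `g ≤ h` iff `g⁻¹ * h ∈ P`. -/
def QLe {G : Type*} [Group G] (P : Submonoid G) (g h : G) : Prop := g⁻¹ * h ∈ P

/-- `u` is the least upper bound of `g` and `h` with respect to `QLe P`. -/
def QLub {G : Type*} [Group G] (P : Submonoid G) (g h u : G) : Prop :=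
  QLe P g u ∧ QLe P h u ∧ ∀ v, QLe P g v → QLe P h v → QLe P u v

/-- `(G, P)` is a quasi-lattice ordered group. -/
structure QuasiLatticeOrdered {G : Type*} [Group G] (P : Submonoid G) : Prop where
  gen : Subgroup.closure (P : Set G) = ⊤
  cap : ∀ g ∈ P, g⁻¹ ∈ P → g = 1
  lub : ∀ g h : G, (∃ u, QLe P g u ∧ QLe P h u) → ∃ u, QLub P g h u

/-- Membership in the algebra `B_P` of subsets of `P` generated by the sets
`pP = {x | p⁻¹ x ∈ P}`, `p ∈ P`: the smallest collection of subsets containing the sets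
`pP` and closed under complements in `P`, finite unions and finite intersections. -/
inductive MemBP {G : Type*} [Group G] (P : Submonoid G) : Set G → Prop
  | basic (p : G) (hp : p ∈ P) : MemBP P {x | QLe P p x}
  | compl (Ω : Set G) : MemBP P Ω → MemBP P ((P : Set G) \ Ω)
  | union (Ω₁ Ω₂ : Set G) : MemBP P Ω₁ → MemBP P Ω₂ → MemBP P (Ω₁ ∪ Ω₂)
  | inter (Ω₁ Ω₂ : Set G) : MemBP P Ω₁ → MemBP P Ω₂ → MemBP P (Ω₁ ∩ Ω₂)

/-- For a finite set `J ⊆ P \ {e}`, `Ω_J = ⋂_{q ∈ J} (P \ qP)`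
(with the convention `Ω_∅ = P`). -/
def OmegaJ {G : Type*} [Group G] (P : Submonoid G) (J : Finset G) : Set G :=
  (P : Set G) ∩ ⋂ q ∈ J, {x | QLe P q x}ᶜ

/-!
For `p ∈ P` let `c p` be the infimum of `μ Ω` over the sets `Ω ∈ B_P` containing `p`; the
extension is `ν = ∑ c p • δ_p`. Given a finite `F ⊆ P`, the cells `{x | p is the largest element
of F below x}`, `p ∈ F`, are disjoint sets of `B_P`, so `∑_{p ∈ Ω} c p ≤ μ Ω` for every
`Ω ∈ B_P`. Applied to `Ω` and `P \ Ω`, this reduces `ν = μ` on `B_P` to `∑_p c p ≥ 1`.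

For that, take a finite `U ⊆ P` such that every `x ∈ P` has a largest element of `U` below it and
`U` contains all `p` outside a small tail of the summable family `μ(pP)`. The cells of `U`
partition `P`. Every `Ω ∈ B_P` containing `p` contains a neighbourhood `pP \ (r₁P ∪ ⋯ ∪ rₙP)` with
`p < rᵢ`, and the part of the cell of `p` outside it lies in cones `rP` with `r ∉ U`. Hence
`μ(cell p) ≤ c p + ∑_{r ∉ U} μ(cell p ∩ rP)`, and summing over `p ∈ U` gives
`1 ≤ ∑_{p ∈ U} c p + ∑_{r ∉ U} μ(rP)`.
-/

open MeasureTheory Set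
open scoped ENNReal

section PointMass

variable {α : Type*} {C : Set (Set α)}

theorem sum_le_tsum_subtype_of_subset (f : α → ℝ≥0∞) {s : Finset α} {S : Set α}
    (hs : (s : Set α) ⊆ S) : ∑ x ∈ s, f x ≤ ∑' x : S, f x :=
  (Finset.tsum_subtype' s f).symm.le.trans (ENNReal.tsum_mono_subtype f hs)

noncomputable def pointMass (m : AddContent ℝ≥0∞ C) (a : α) : ℝ≥0∞ :=
  ⨅ s ∈ C, ⨅ (_ : a ∈ s), m s

theorem pointMass_le (m : AddContent ℝ≥0∞ C) {s : Set α} (hs : s ∈ C) {a : α} (ha : a ∈ s) :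
    pointMass m a ≤ m s :=
  (iInf₂_le s hs).trans (iInf_le _ ha)

theorem sum_pointMass_le (hC : IsSetRing C) (m : AddContent ℝ≥0∞ C) {t : Set α} (ht : t ∈ C)
    {F : Finset α} (hF : (F : Set α) ⊆ t) {V : α → Set α} (hV : ∀ a ∈ F, V a ∈ C)
    (haV : ∀ a ∈ F, a ∈ V a) (hdisj : (F : Set α).PairwiseDisjoint V) :
    ∑ a ∈ F, pointMass m a ≤ m t := by
  have htV : ∀ a ∈ F, t ∩ V a ∈ C := fun a ha => hC.inter_mem ht (hV a ha)
  calc ∑ a ∈ F, pointMass m a ≤ ∑ a ∈ F, m (t ∩ V a) :=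
        Finset.sum_le_sum fun a ha => pointMass_le m (htV a ha) ⟨hF ha, haV a ha⟩
    _ = m (⋃ a ∈ F, t ∩ V a) :=
        (addContent_biUnion_eq hC htV (hdisj.mono fun _ => inter_subset_right)).symm
    _ ≤ m t := addContent_mono hC.isSetSemiring (hC.biUnion_mem F htV) ht
        (iUnion₂_subset fun _ _ => inter_subset_left)

end PointMass

theorem ENNReal.exists_finset_tsum_sdiff_lt {α : Type*} {S : Set α} {f : α → ℝ≥0∞}
    (hf : ∑' x : S, f x ≠ ∞) {ε : ℝ≥0∞} (hε : 0 < ε) :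
    ∃ s : Finset α, (s : Set α) ⊆ S ∧ ∑' x : ↥(S \ s), f x < ε := by
  obtain ⟨t, ht⟩ := ((ENNReal.tendsto_tsum_compl_atTop_zero hf).eventually (gt_mem_nhds hε)).exists
  refine ⟨t.map (Function.Embedding.subtype _), by simp, lt_of_le_of_lt ?_ ht⟩
  let g : ↥(S \ (t.map (Function.Embedding.subtype _) : Set α)) → {x : S // x ∉ t} :=
    fun x => ⟨⟨x, x.2.1⟩, fun hx => x.2.2 (Finset.mem_map_of_mem _ hx)⟩
  exact ENNReal.tsum_comp_le_tsum_of_injective (f := g)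
    (fun x y hxy => Subtype.ext (congrArg (fun z : {x : S // x ∉ t} => (z : α)) hxy)) _

section QuasiLattice

variable {G : Type*} [Group G] {P : Submonoid G}

theorem QLe.refl (g : G) : QLe P g g := by
  simp only [QLe, inv_mul_cancel, one_mem]

theorem QLe.trans {a b c : G} (hab : QLe P a b) (hbc : QLe P b c) : QLe P a c := by
  simpa [QLe, mul_assoc] using mul_mem hab hbc

theorem QLe.mem {p x : G} (h : QLe P p x) (hp : p ∈ P) : x ∈ P := by
  simpa using mul_mem hp h

theorem QuasiLatticeOrdered.qle_antisymm (hQL : QuasiLatticeOrdered P) {a b : G}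
    (hab : QLe P a b) (hba : QLe P b a) : a = b :=
  inv_mul_eq_one.mp (hQL.cap _ hab (by simpa [QLe] using hba))

/-- The principal right ideal `pP`. -/
def cone (P : Submonoid G) (p : G) : Set G := {x | QLe P p x}

@[simp] theorem mem_cone {p x : G} : x ∈ cone P p ↔ QLe P p x := Iff.rfl

theorem cone_one : cone P 1 = P := by
  ext x; simp [QLe]

theorem memBP_cone {p : G} (hp : p ∈ P) : MemBP P (cone P p) := MemBP.basic p hp

theorem MemBP.subset {Ω : Set G} (h : MemBP P Ω) : Ω ⊆ P := by
  induction h with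
  | basic p hp => exact fun x hx => QLe.mem hx hp
  | compl => exact sdiff_subset
  | union _ _ _ _ ih₁ ih₂ => exact union_subset ih₁ ih₂
  | inter _ _ _ _ ih₁ _ => exact inter_subset_left.trans ih₁

theorem memBP_coe : MemBP P (P : Set G) := cone_one (P := P) ▸ memBP_cone (one_mem P)

theorem isSetRing_memBP : IsSetRing {Ω : Set G | MemBP P Ω} where
  empty_mem := by simpa using MemBP.compl _ (memBP_coe (P := P))
  union_mem _ _ := MemBP.union _ _
  sdiff_mem s t hs ht := by
    rw [← inter_eq_left.2 hs.subset, inter_sdiff_assoc]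
    exact MemBP.inter _ _ hs (MemBP.compl _ ht)

/-- Stated for `Ω` and its complement at once, so that the induction passes through `compl`. -/
theorem MemBP.exists_cone_sdiff_subset_or_disjoint (hQL : QuasiLatticeOrdered P) {Ω : Set G}
    (hΩ : MemBP P Ω) {p : G} (hp : p ∈ P) :
    ∃ R : Finset G, (∀ r ∈ R, QLe P p r ∧ r ≠ p) ∧
      (cone P p \ ⋃ r ∈ R, cone P r ⊆ Ω ∨ Disjoint (cone P p \ ⋃ r ∈ R, cone P r) Ω) := by
  classical
  have shrink : ∀ {R R' : Finset G} {Ω : Set G}, R ⊆ R' →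
      (cone P p \ ⋃ r ∈ R, cone P r ⊆ Ω ∨ Disjoint (cone P p \ ⋃ r ∈ R, cone P r) Ω) →
      (cone P p \ ⋃ r ∈ R', cone P r ⊆ Ω ∨ Disjoint (cone P p \ ⋃ r ∈ R', cone P r) Ω) := by
    intro R R' Ω hRR' h
    have hsub : cone P p \ ⋃ r ∈ R', cone P r ⊆ cone P p \ ⋃ r ∈ R, cone P r :=
      sdiff_subset_sdiff_right (biUnion_subset_biUnion_left hRR')
    exact h.imp hsub.trans (Disjoint.mono_left hsub)
  induction hΩ with
  | basic q _ =>
    by_cases hqp : QLe P q p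
    · exact ⟨∅, by simp, Or.inl fun x hx => hqp.trans (by simpa using hx)⟩
    by_cases hub : ∃ v, QLe P p v ∧ QLe P q v
    · obtain ⟨u, hpu, hqu, hu⟩ := hQL.lub p q hub
      refine ⟨{u}, by simpa using ⟨hpu, fun h => hqp (h ▸ hqu)⟩, Or.inr ?_⟩
      exact disjoint_left.2 fun x hx hqx => hx.2 (by simpa using hu x hx.1 hqx)
    · exact ⟨∅, by simp, Or.inr (disjoint_left.2 fun x hx hqx => hub ⟨x, by simp_all⟩)⟩
  | compl Ω _ ih =>
    obtain ⟨R, hR, h⟩ := ih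
    refine ⟨R, hR, h.symm.imp (fun hd x hx => ⟨?_, disjoint_left.1 hd hx⟩)
      (fun hs => disjoint_left.2 fun x hx hxΩ => hxΩ.2 (hs hx))⟩
    exact QLe.mem hx.1 hp
  | union Ω₁ Ω₂ _ _ ih₁ ih₂ =>
    obtain ⟨R₁, hR₁, h₁⟩ := ih₁
    obtain ⟨R₂, hR₂, h₂⟩ := ih₂
    refine ⟨R₁ ∪ R₂, fun r hr => (Finset.mem_union.1 hr).elim (hR₁ r) (hR₂ r), ?_⟩
    rcases shrink Finset.subset_union_left h₁ with h₁ | h₁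
    · exact Or.inl (h₁.trans subset_union_left)
    rcases shrink Finset.subset_union_right h₂ with h₂ | h₂
    · exact Or.inl (h₂.trans subset_union_right)
    · exact Or.inr (h₁.union_right h₂)
  | inter Ω₁ Ω₂ _ _ ih₁ ih₂ =>
    obtain ⟨R₁, hR₁, h₁⟩ := ih₁
    obtain ⟨R₂, hR₂, h₂⟩ := ih₂
    refine ⟨R₁ ∪ R₂, fun r hr => (Finset.mem_union.1 hr).elim (hR₁ r) (hR₂ r), ?_⟩
    rcases shrink Finset.subset_union_left h₁ with h₁ | h₁
    · rcases shrink Finset.subset_union_right h₂ with h₂ | h₂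
      · exact Or.inl (subset_inter h₁ h₂)
      · exact Or.inr (h₂.mono_right inter_subset_right)
    · exact Or.inr (h₁.mono_right inter_subset_left)

theorem MemBP.exists_cone_sdiff_subset (hQL : QuasiLatticeOrdered P) {Ω : Set G}
    (hΩ : MemBP P Ω) {p : G} (hpΩ : p ∈ Ω) :
    ∃ R : Finset G, (∀ r ∈ R, QLe P p r ∧ r ≠ p) ∧ cone P p \ ⋃ r ∈ R, cone P r ⊆ Ω := by
  obtain ⟨R, hR, h⟩ := hΩ.exists_cone_sdiff_subset_or_disjoint hQL (hΩ.subset hpΩ)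
  refine ⟨R, hR, h.resolve_right fun hd => disjoint_left.1 hd ?_ hpΩ⟩
  refine ⟨QLe.refl p, ?_⟩
  simp only [mem_iUnion, mem_cone, not_exists]
  exact fun r hr hrp => (hR r hr).2 (hQL.qle_antisymm hrp (hR r hr).1)

/-- `cell P U p` is the set of `x` such that `p` is the largest element of `U` below `x`. -/
def cell (P : Submonoid G) (U : Finset G) (p : G) : Set G :=
  {x | QLe P p x ∧ ∀ r ∈ U, QLe P r x → QLe P r p}

theorem self_mem_cell (U : Finset G) (p : G) : p ∈ cell P U p :=
  ⟨QLe.refl p, fun _ _ h => h⟩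

theorem QuasiLatticeOrdered.pairwiseDisjoint_cell (hQL : QuasiLatticeOrdered P) (U : Finset G) :
    (U : Set G).PairwiseDisjoint (cell P U) := by
  intro p hp p' hp' hne
  refine disjoint_left.2 fun x hx hx' => hne ?_
  exact hQL.qle_antisymm (hx'.2 p hp hx.1) (hx.2 p' hp' hx'.1)

theorem memBP_cell {U : Finset G} (hU : (U : Set G) ⊆ P) {p : G} (hp : p ∈ P) :
    MemBP P (cell P U p) := by
  classical
  have h : cell P U p = cone P p \ ⋃ r ∈ U.filter (fun r => ¬ QLe P r p), cone P r := by
    ext x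
    simp only [cell, mem_ofPred_eq, mem_sdiff, mem_iUnion, Finset.mem_filter, mem_cone]
    grind
  rw [h]
  exact isSetRing_memBP.sdiff_mem (memBP_cone hp)
    (isSetRing_memBP.biUnion_mem _ fun r hr => memBP_cone (hU (Finset.mem_filter.1 hr).1))

def HasMaxBelow (P : Submonoid G) (U : Finset G) : Prop :=
  ∀ x ∈ P, ∃ p ∈ U, QLe P p x ∧ ∀ r ∈ U, QLe P r x → QLe P r p

theorem HasMaxBelow.biUnion_cell {U : Finset G} (hU : HasMaxBelow P U) (hUP : (U : Set G) ⊆ P) :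
    ⋃ p ∈ U, cell P U p = P := by
  refine subset_antisymm (iUnion₂_subset fun p hp x hx => hx.1.mem (hUP hp)) fun x hx => ?_
  obtain ⟨p, hp, hpx⟩ := hU x hx
  exact mem_biUnion hp hpx

/-- The new largest element below `x` is `a ∨ p` when `a ≤ x`, where `p` is the old one. -/
theorem QuasiLatticeOrdered.exists_hasMaxBelow_insert (hQL : QuasiLatticeOrdered P)
    {U : Finset G} (hU : HasMaxBelow P U) (hUP : (U : Set G) ⊆ P) {a : G} (ha : a ∈ P) :
    ∃ U' : Finset G, a ∈ U' ∧ U ⊆ U' ∧ (U' : Set G) ⊆ P ∧ HasMaxBelow P U' := by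
  classical
  have hjoin : ∀ r, ∃ w, (∃ v, QLe P a v ∧ QLe P r v) → QLub P a r w := fun r => by
    by_cases h : ∃ v, QLe P a v ∧ QLe P r v
    · exact (hQL.lub a r h).imp fun w hw _ => hw
    · exact ⟨1, fun h' => absurd h' h⟩
  choose join hjoin using hjoin
  set V := U.filter fun r => ∃ v, QLe P a v ∧ QLe P r v
  have hV : ∀ r ∈ V, QLub P a r (join r) := fun r hr => hjoin r (Finset.mem_filter.1 hr).2
  refine ⟨insert a (U ∪ V.image join), by simp, fun r hr => by simp [hr], ?_, fun x hx => ?_⟩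
  · simp only [Finset.coe_insert, Finset.coe_union, Finset.coe_image]
    refine insert_subset ha (union_subset hUP ?_)
    rintro _ ⟨r, hr, rfl⟩
    exact (hV r hr).1.mem ha
  obtain ⟨p, hpU, hpx, hp⟩ := hU x hx
  have hbelow : ∀ r ∈ V, QLe P (join r) x → QLe P r x := fun r hr h => (hV r hr).2.1.trans h
  by_cases hax : QLe P a x
  · have hpV : p ∈ V := Finset.mem_filter.2 ⟨hpU, x, hax, hpx⟩
    obtain ⟨hap, hpp, hjoin_le⟩ := hV p hpV
    refine ⟨join p, by simpa using Or.inr (Or.inr ⟨p, hpV, rfl⟩), hjoin_le x hax hpx,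
      fun y hy hyx => ?_⟩
    simp only [Finset.mem_insert, Finset.mem_union, Finset.mem_image] at hy
    rcases hy with rfl | hyU | ⟨r, hrV, rfl⟩
    · exact hap
    · exact (hp y hyU hyx).trans hpp
    · exact (hV r hrV).2.2 _ hap ((hp r (Finset.mem_filter.1 hrV).1 (hbelow r hrV hyx)).trans hpp)
  · refine ⟨p, by simp [hpU], hpx, fun y hy hyx => ?_⟩
    simp only [Finset.mem_insert, Finset.mem_union, Finset.mem_image] at hy
    rcases hy with rfl | hyU | ⟨r, hrV, rfl⟩
    · exact absurd hyx hax
    · exact hp y hyU hyx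
    · exact absurd ((hV r hrV).1.trans hyx) hax

theorem QuasiLatticeOrdered.exists_hasMaxBelow (hQL : QuasiLatticeOrdered P) (s : Finset G)
    (hs : (s : Set G) ⊆ P) : ∃ U : Finset G, s ⊆ U ∧ (U : Set G) ⊆ P ∧ HasMaxBelow P U := by
  classical
  induction s using Finset.induction with
  | empty =>
    refine ⟨{1}, Finset.empty_subset _, by simp [one_mem], fun x hx => ⟨1, by simp, ?_⟩⟩
    simp only [Finset.mem_singleton, forall_eq, QLe.refl, implies_true, and_true]
    simpa [QLe] using hx
  | insert a s _ ih =>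
    rw [Finset.coe_insert, insert_subset_iff] at hs
    obtain ⟨U, hsU, hUP, hU⟩ := ih hs.2
    obtain ⟨U', haU', hUU', hU'P, hmax⟩ := hQL.exists_hasMaxBelow_insert hU hUP hs.1
    exact ⟨U', Finset.insert_subset haU' (hsU.trans hUU'), hU'P, hmax⟩

section Content

variable (m : AddContent ℝ≥0∞ {Ω : Set G | MemBP P Ω})

theorem QuasiLatticeOrdered.sum_pointMass_le (hQL : QuasiLatticeOrdered P) {Ω : Set G}
    (hΩ : MemBP P Ω) {F : Finset G} (hF : (F : Set G) ⊆ Ω) :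
    ∑ p ∈ F, pointMass m p ≤ m Ω :=
  _root_.sum_pointMass_le isSetRing_memBP m hΩ hF
    (fun _ hp => memBP_cell (hF.trans hΩ.subset) (hΩ.subset (hF hp)))
    (fun p _ => self_mem_cell F p) (hQL.pairwiseDisjoint_cell F)

theorem QuasiLatticeOrdered.tsum_indicator_pointMass_le (hQL : QuasiLatticeOrdered P)
    {Ω : Set G} (hΩ : MemBP P Ω) :
    ∑' p : P, {p : P | (p : G) ∈ Ω}.indicator (fun p => pointMass m p) p ≤ m Ω := by
  classical
  refine ENNReal.summable.tsum_le_of_sum_le fun t => ?_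
  rw [Finset.sum_indicator_eq_sum_filter]
  simpa using hQL.sum_pointMass_le m hΩ
    (F := (t.filter fun p : P => (p : G) ∈ Ω).map (Function.Embedding.subtype _))
    (by simp +contextual [Set.subset_def])

theorem HasMaxBelow.sum_content_cell_inter (hQL : QuasiLatticeOrdered P) {U : Finset G}
    (hU : HasMaxBelow P U) (hUP : (U : Set G) ⊆ P) {Ω : Set G} (hΩ : MemBP P Ω) :
    ∑ p ∈ U, m (cell P U p ∩ Ω) = m Ω := by
  rw [← addContent_biUnion_eq isSetRing_memBP
    (fun p hp => isSetRing_memBP.inter_mem (memBP_cell hUP (hUP hp)) hΩ)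
    ((hQL.pairwiseDisjoint_cell U).mono fun _ => inter_subset_left),
    ← iUnion₂_inter, hU.biUnion_cell hUP, inter_eq_right.2 hΩ.subset]

theorem QuasiLatticeOrdered.content_cell_le (hQL : QuasiLatticeOrdered P) {U : Finset G}
    (hUP : (U : Set G) ⊆ P) {p : G} (hpU : p ∈ U) :
    m (cell P U p) ≤ pointMass m p + ∑' r : ↥((P : Set G) \ U), m (cell P U p ∩ cone P r) := by
  classical
  simp only [pointMass, ENNReal.iInf_add]
  refine le_iInf₂ fun Ω hΩ => le_iInf fun hpΩ => ?_
  obtain ⟨R, hR, hRΩ⟩ := MemBP.exists_cone_sdiff_subset hQL hΩ hpΩ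
  set R' := R.filter (· ∉ U)
  have hR'P : (R' : Set G) ⊆ (P : Set G) \ U := fun r hr => by
    obtain ⟨hrR, hrU⟩ := Finset.mem_filter.1 hr
    exact ⟨(hR r hrR).1.mem (hUP hpU), hrU⟩
  have hmem : ∀ r ∈ R', MemBP P (cell P U p ∩ cone P r) := fun r hr =>
    isSetRing_memBP.inter_mem (memBP_cell hUP (hUP hpU)) (memBP_cone (hR'P hr).1)
  have hcover : cell P U p ⊆ Ω ∪ ⋃ r ∈ R', cell P U p ∩ cone P r := by
    intro x hx
    by_contra hxΩ
    simp only [mem_union, mem_iUnion, not_or, not_exists] at hxΩ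
    obtain ⟨r, hrR, hrx⟩ : ∃ r ∈ R, QLe P r x := by
      by_contra! h
      exact hxΩ.1 (hRΩ ⟨hx.1, by simpa using h⟩)
    have hrU : r ∉ U := fun hrU =>
      (hR r hrR).2 (hQL.qle_antisymm (hx.2 r hrU hrx) (hR r hrR).1)
    exact hxΩ.2 r (Finset.mem_filter.2 ⟨hrR, hrU⟩) ⟨hx, hrx⟩
  calc m (cell P U p)
      ≤ m (Ω ∪ ⋃ r ∈ R', cell P U p ∩ cone P r) :=
        addContent_mono isSetRing_memBP.isSetSemiring (memBP_cell hUP (hUP hpU))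
          (isSetRing_memBP.union_mem hΩ (isSetRing_memBP.biUnion_mem R' hmem)) hcover
    _ ≤ m Ω + ∑ r ∈ R', m (cell P U p ∩ cone P r) :=
        (addContent_union_le isSetRing_memBP hΩ (isSetRing_memBP.biUnion_mem R' hmem)).trans
          (add_le_add_right (addContent_biUnion_le isSetRing_memBP hmem) _)
    _ ≤ m Ω + ∑' r : ↥((P : Set G) \ U), m (cell P U p ∩ cone P r) :=
        add_le_add_right (sum_le_tsum_subtype_of_subset _ hR'P) _

theorem HasMaxBelow.content_le_sum_pointMass_add_tsum (hQL : QuasiLatticeOrdered P)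
    {U : Finset G} (hU : HasMaxBelow P U) (hUP : (U : Set G) ⊆ P) :
    m P ≤ ∑ p ∈ U, pointMass m p + ∑' r : ↥((P : Set G) \ U), m (cone P r) := by
  calc m P = ∑ p ∈ U, m (cell P U p ∩ P) := (hU.sum_content_cell_inter m hQL hUP memBP_coe).symm
    _ ≤ ∑ p ∈ U, (pointMass m p + ∑' r : ↥((P : Set G) \ U), m (cell P U p ∩ cone P r)) := by
        refine Finset.sum_le_sum fun p hp => ?_
        rw [inter_eq_left.2 fun x hx => hx.1.mem (hUP hp)]
        exact hQL.content_cell_le m hUP hp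
    _ = ∑ p ∈ U, pointMass m p + ∑' r : ↥((P : Set G) \ U), m (cone P r) := by
        rw [Finset.sum_add_distrib, ← Summable.tsum_finsetSum fun _ _ => ENNReal.summable]
        congr 1
        exact tsum_congr fun r => hU.sum_content_cell_inter m hQL hUP (memBP_cone r.2.1)

theorem QuasiLatticeOrdered.content_le_tsum_pointMass (hQL : QuasiLatticeOrdered P)
    (hm : ∑' p : P, m (cone P p) ≠ ∞) : m P ≤ ∑' p : P, pointMass m p := by
  refine ENNReal.le_of_forall_pos_le_add fun ε hε _ => ?_
  obtain ⟨s, hsP, hs⟩ := ENNReal.exists_finset_tsum_sdiff_lt (S := (P : Set G))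
    (f := fun x => m (cone P x)) hm (ENNReal.coe_pos.2 hε)
  obtain ⟨U, hsU, hUP, hU⟩ := hQL.exists_hasMaxBelow s hsP
  calc m P ≤ ∑ p ∈ U, pointMass m p + ∑' r : ↥((P : Set G) \ U), m (cone P r) :=
        hU.content_le_sum_pointMass_add_tsum m hQL hUP
    _ ≤ ∑' p : P, pointMass m p + ε := add_le_add (sum_le_tsum_subtype_of_subset _ hUP)
        ((ENNReal.tsum_mono_subtype (fun x => m (cone P x))
          (sdiff_subset_sdiff_right hsU)).trans hs.le)

theorem QuasiLatticeOrdered.tsum_pointMass (hQL : QuasiLatticeOrdered P)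
    (hm : ∑' p : P, m (cone P p) ≠ ∞) : ∑' p : P, pointMass m p = m P := by
  refine le_antisymm ?_ (hQL.content_le_tsum_pointMass m hm)
  simpa using hQL.tsum_indicator_pointMass_le m memBP_coe

theorem QuasiLatticeOrdered.tsum_indicator_pointMass (hQL : QuasiLatticeOrdered P)
    (hm : ∑' p : P, m (cone P p) ≠ ∞) {Ω : Set G} (hΩ : MemBP P Ω) :
    ∑' p : P, {p : P | (p : G) ∈ Ω}.indicator (fun p => pointMass m p) p = m Ω := by
  have hΩc : MemBP P ((P : Set G) \ Ω) := MemBP.compl _ hΩ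
  have hmP : m P ≠ ∞ := ne_top_of_le_ne_top hm
    (cone_one (P := P) ▸ ENNReal.le_tsum (f := fun p : P => m (cone P p)) 1)
  have hsplit : m Ω + m ((P : Set G) \ Ω) = m P := by
    rw [← addContent_union isSetRing_memBP hΩ hΩc disjoint_sdiff_right,
      union_sdiff_cancel hΩ.subset]
  have hcompl : {p : P | (p : G) ∈ (P : Set G) \ Ω} = {p : P | (p : G) ∈ Ω}ᶜ := by
    ext p; simp
  have hsum : ∑' p : P, {p : P | (p : G) ∈ Ω}.indicator (fun p => pointMass m p) p
      + ∑' p : P, {p : P | (p : G) ∈ (P : Set G) \ Ω}.indicator (fun p => pointMass m p) p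
      = m P := by
    rw [← ENNReal.tsum_add, hcompl, ← hQL.tsum_pointMass m hm]
    exact tsum_congr fun p => congrFun (indicator_self_add_compl _ _) p
  refine le_antisymm (hQL.tsum_indicator_pointMass_le m hΩ) ?_
  refine ENNReal.le_of_add_le_add_right (ne_top_of_le_ne_top hmP (hsplit ▸ le_add_self)) ?_
  calc m Ω + m ((P : Set G) \ Ω) = m P := hsplit
    _ = _ := hsum.symm
    _ ≤ _ := add_le_add_right (hQL.tsum_indicator_pointMass_le m hΩc) _

end Content

end QuasiLattice

/-- If `μ` is a finitely additive probability measure on `(P, B_P)` with `(μ(pP))_{p ∈ P}`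
summable, then `μ` extends to a countably additive probability measure defined on all
subsets of `P` (the σ-algebra `⊤` on the subtype `P`). -/
theorem stmt9 {G : Type*} [Group G] (P : Submonoid G) (hQL : QuasiLatticeOrdered P)
    (μ : Set G → ℝ)
    (hpos : ∀ Ω : Set G, MemBP P Ω → 0 ≤ μ Ω)
    (hone : μ (P : Set G) = 1)
    (hadd : ∀ Ω₁ Ω₂ : Set G, MemBP P Ω₁ → MemBP P Ω₂ → Disjoint Ω₁ Ω₂ →
      μ (Ω₁ ∪ Ω₂) = μ Ω₁ + μ Ω₂)
    (hsum : Summable fun p : P => μ {x | QLe P (p : G) x}) :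
    ∃ ν : @MeasureTheory.Measure {x : G // x ∈ P} ⊤,
      @MeasureTheory.IsProbabilityMeasure _ ⊤ ν ∧
      ∀ Ω : Set G, MemBP P Ω →
        ν {x : {x : G // x ∈ P} | (x : G) ∈ Ω} = ENNReal.ofReal (μ Ω) := by
  let _ : MeasurableSpace P := ⊤
  have hempty : μ ∅ = 0 := by
    simpa using hadd ∅ ∅ isSetRing_memBP.empty_mem isSetRing_memBP.empty_mem (disjoint_empty _)
  let m : AddContent ℝ≥0∞ {Ω : Set G | MemBP P Ω} :=
    isSetRing_memBP.addContent_of_union (fun Ω => ENNReal.ofReal (μ Ω)) (by simp [hempty])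
      fun hs ht hst => by
        simp only [hadd _ _ hs ht hst, ENNReal.ofReal_add (hpos _ hs) (hpos _ ht)]
  have hmμ : ∀ Ω, m Ω = ENNReal.ofReal (μ Ω) := fun _ => rfl
  have hm : ∑' p : P, m (cone P p) ≠ ∞ := by
    simp only [hmμ, cone]
    rw [← ENNReal.ofReal_tsum_of_nonneg (f := fun p : P => μ {x | QLe P (p : G) x})
      (fun p => hpos _ (memBP_cone p.2)) hsum]
    exact ENNReal.ofReal_ne_top
  have hmass : ∑' p : P, pointMass m p = 1 := by
    rw [hQL.tsum_pointMass m hm, hmμ, hone, ENNReal.ofReal_one]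
  let ν : PMF P := ⟨fun p => pointMass m p, hmass ▸ ENNReal.summable.hasSum⟩
  refine ⟨ν.toMeasure, inferInstance, fun Ω hΩ => ?_⟩
  rw [ν.toMeasure_apply MeasurableSpace.measurableSet_top]
  exact hQL.tsum_indicator_pointMass m hm hΩ
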